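/- (Sup-norm bound for the QWOLCT.) Let g ∈ L²(ℝ²,ℍ) be a nonzero window function and f ∈ L²(ℝ²,ℍ). Then for every u, ξ ∈ ℝ², |O_g[f](u,ξ)| ≤ (1/(2π|b₁b₂|^{1/2})) · ‖f‖₂ · ‖g‖₂, i.e. ‖O_g[f]‖_{L^∞(ℝ²×ℝ²,ℍ)} ≤ (2π|b₁b₂|^{1/2})^{−1} ‖f‖₂ ‖g‖₂. -/

import Mathlib

open MeasureTheory

noncomputable section

/-- The real quaternions `ℍ`. -/
abbrev ℍ := Quaternion ℝ

/-- The imaginary unit `i` of `ℍ`. -/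
def qi : ℍ := ⟨0, 1, 0, 0⟩

/-- The imaginary unit `j` of `ℍ`. -/
def qj : ℍ := ⟨0, 0, 1, 0⟩

/-- `eexp e θ = exp (θ • e)` for a quaternion `e` and real `θ`. -/
def eexp (e : ℍ) (θ : ℝ) : ℍ := NormedSpace.exp (θ • e)

/-- The offset linear canonical transform kernel with imaginary unit `e` and
parameters `a b d p q`:
`(2πb)^{-1/2} exp((e/(2b))[a t² − 2t(w−p) − 2w(dp−bq) + d(w²+p²) − πb/2])`. -/
def kern (e : ℍ) (a b d p q : ℝ) (t w : ℝ) : ℍ :=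
  (Real.sqrt (2 * Real.pi * b))⁻¹ •
    eexp e ((2 * b)⁻¹ *
      (a * t ^ 2 - 2 * t * (w - p) - 2 * w * (d * p - b * q) + d * (w ^ 2 + p ^ 2)
        - Real.pi * b / 2))

/-- The two-sided quaternion offset linear canonical transform (QOLCT). -/
def QOLCT (a₁ b₁ d₁ p₁ q₁ a₂ b₂ d₂ p₂ q₂ : ℝ) (f : ℝ × ℝ → ℍ) (w : ℝ × ℝ) : ℍ :=
  ∫ t : ℝ × ℝ, kern qi a₁ b₁ d₁ p₁ q₁ t.1 w.1 * f t * kern qj a₂ b₂ d₂ p₂ q₂ t.2 w.2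

/-- The inverse QOLCT. -/
def QOLCTinv (a₁ b₁ d₁ p₁ q₁ a₂ b₂ d₂ p₂ q₂ : ℝ) (F : ℝ × ℝ → ℍ) (t : ℝ × ℝ) : ℍ :=
  ∫ w : ℝ × ℝ, star (kern qi a₁ b₁ d₁ p₁ q₁ t.1 w.1) * F w *
    star (kern qj a₂ b₂ d₂ p₂ q₂ t.2 w.2)

/-- The two-sided quaternion windowed offset linear canonical transform (QWOLCT)
with window `g`. -/
def QWOLCT (a₁ b₁ d₁ p₁ q₁ a₂ b₂ d₂ p₂ q₂ : ℝ) (g f : ℝ × ℝ → ℍ) (u w : ℝ × ℝ) : ℍ :=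
  ∫ t : ℝ × ℝ, kern qi a₁ b₁ d₁ p₁ q₁ t.1 w.1 * f t * star (g (t - u)) *
    kern qj a₂ b₂ d₂ p₂ q₂ t.2 w.2

/-- The `k`-th coordinate of a point of `ℝ²`. -/
def coord (k : Fin 2) (t : ℝ × ℝ) : ℝ := if k = 0 then t.1 else t.2


lemma norm_eexp (e : ℍ) (he : e.re = 0) (θ : ℝ) : ‖eexp e θ‖ = 1 := by
  unfold eexp
  rw [Quaternion.norm_exp]
  have : (θ • e).re = 0 := by simp [he]
  rw [this]
  simp

lemma norm_kern (e : ℍ) (he : e.re = 0) (a b d p q t w : ℝ) :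
    ‖kern e a b d p q t w‖ = (Real.sqrt (2 * Real.pi * b))⁻¹ := by
  unfold kern
  rw [norm_smul, norm_eexp e he, mul_one, Real.norm_eq_abs,
    abs_of_nonneg (inv_nonneg.2 (Real.sqrt_nonneg _))]

/-- **Sup-norm bound for the QWOLCT.** -/
theorem qwolct_sup_norm_bound
    (a₁ b₁ c₁ d₁ p₁ q₁ a₂ b₂ c₂ d₂ p₂ q₂ : ℝ)
    (h₁ : a₁ * d₁ - b₁ * c₁ = 1) (h₂ : a₂ * d₂ - b₂ * c₂ = 1)
    (hb₁ : b₁ ≠ 0) (hb₂ : b₂ ≠ 0)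
    (f g : ℝ × ℝ → ℍ) (hf : MemLp f 2 volume) (hg : MemLp g 2 volume) (hg0 : g ≠ 0)
    (u ξ : ℝ × ℝ) :
    ‖QWOLCT a₁ b₁ d₁ p₁ q₁ a₂ b₂ d₂ p₂ q₂ g f u ξ‖ ≤
      (2 * Real.pi * Real.sqrt |b₁ * b₂|)⁻¹ *
        ((∫ t : ℝ × ℝ, ‖f t‖ ^ 2) ^ ((1 : ℝ) / 2) *
          (∫ t : ℝ × ℝ, ‖g t‖ ^ 2) ^ ((1 : ℝ) / 2)) := by
  set C : ℝ := (Real.sqrt (2 * Real.pi * b₁))⁻¹ * (Real.sqrt (2 * Real.pi * b₂))⁻¹ with hC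
  set D : ℝ := (2 * Real.pi * Real.sqrt |b₁ * b₂|)⁻¹ with hD
  have hfn : MemLp (fun t : ℝ × ℝ => ‖f t‖) (ENNReal.ofReal 2) volume := by
    have : (ENNReal.ofReal 2) = 2 := by norm_num
    rw [this]; exact hf.norm
  have hgt : MemLp (fun t : ℝ × ℝ => g (t - u)) 2 volume :=
    hg.comp_measurePreserving (measurePreserving_sub_right volume u)
  have hgn : MemLp (fun t : ℝ × ℝ => ‖g (t - u)‖) (ENNReal.ofReal 2) volume := by
    have : (ENNReal.ofReal 2) = 2 := by norm_num
    rw [this]; exact hgt.norm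
  have hpq : (2 : ℝ).HolderConjugate 2 := Real.HolderConjugate.two_two
  have holder := MeasureTheory.integral_mul_le_Lp_mul_Lq_of_nonneg hpq
    (Filter.Eventually.of_forall fun t => norm_nonneg (f t))
    (Filter.Eventually.of_forall fun t => norm_nonneg (g (t - u))) hfn hgn
  have hrpow : ∀ x : ℝ, 0 ≤ x → x ^ (2 : ℝ) = x ^ 2 := by
    intro x hx
    rw [show (2 : ℝ) = ((2 : ℕ) : ℝ) by norm_num, Real.rpow_natCast]
  have hf2 : (∫ t : ℝ × ℝ, ‖f t‖ ^ (2 : ℝ)) = ∫ t : ℝ × ℝ, ‖f t‖ ^ 2 :=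
    integral_congr_ae (Filter.Eventually.of_forall fun t => hrpow _ (norm_nonneg _))
  have hg2 : (∫ t : ℝ × ℝ, ‖g (t - u)‖ ^ (2 : ℝ)) = ∫ t : ℝ × ℝ, ‖g t‖ ^ 2 := by
    rw [integral_congr_ae (Filter.Eventually.of_forall fun t => hrpow _ (norm_nonneg _))]
    exact integral_sub_right_eq_self (μ := volume) (fun t : ℝ × ℝ => ‖g t‖ ^ 2) u
  rw [hf2, hg2] at holder
  have hCD : C ≤ D := by
    rcases le_or_gt b₁ 0 with h1 | h1
    · have : Real.sqrt (2 * Real.pi * b₁) = 0 := by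
        apply Real.sqrt_eq_zero_of_nonpos
        have := Real.pi_pos
        nlinarith
      rw [hC, this]
      simp only [inv_zero, zero_mul]
      positivity
    rcases le_or_gt b₂ 0 with h2 | h2
    · have : Real.sqrt (2 * Real.pi * b₂) = 0 := by
        apply Real.sqrt_eq_zero_of_nonpos
        have := Real.pi_pos
        nlinarith
      rw [hC, this]
      simp only [inv_zero, mul_zero]
      positivity
    · have hpi := Real.pi_pos
      have : Real.sqrt (2 * Real.pi * b₁) * Real.sqrt (2 * Real.pi * b₂)
          = 2 * Real.pi * Real.sqrt |b₁ * b₂| := by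
        rw [← Real.sqrt_mul (by positivity), abs_of_pos (by positivity),
          Real.sqrt_eq_iff_eq_sq] <;> try positivity
        rw [mul_pow, Real.sq_sqrt (by positivity)]
        ring
      rw [hC, hD, ← mul_inv, this]
  have hprod : 0 ≤ (∫ t : ℝ × ℝ, ‖f t‖ ^ 2) ^ ((1 : ℝ) / 2) *
      (∫ t : ℝ × ℝ, ‖g t‖ ^ 2) ^ ((1 : ℝ) / 2) := by positivity
  calc ‖QWOLCT a₁ b₁ d₁ p₁ q₁ a₂ b₂ d₂ p₂ q₂ g f u ξ‖
      ≤ ∫ t : ℝ × ℝ, ‖kern qi a₁ b₁ d₁ p₁ q₁ t.1 ξ.1 * f t * star (g (t - u)) *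
          kern qj a₂ b₂ d₂ p₂ q₂ t.2 ξ.2‖ := norm_integral_le_integral_norm _
    _ = ∫ t : ℝ × ℝ, C * (‖f t‖ * ‖g (t - u)‖) := by
        refine integral_congr_ae (Filter.Eventually.of_forall fun t => ?_)
        simp only [norm_mul, norm_star, norm_kern qi rfl, norm_kern qj rfl]
        ring
    _ = C * ∫ t : ℝ × ℝ, ‖f t‖ * ‖g (t - u)‖ := integral_const_mul _ _
    _ ≤ C * ((∫ t : ℝ × ℝ, ‖f t‖ ^ 2) ^ ((1 : ℝ) / 2) *
          (∫ t : ℝ × ℝ, ‖g t‖ ^ 2) ^ ((1 : ℝ) / 2)) := by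
        refine mul_le_mul_of_nonneg_left ?_ (by rw [hC]; positivity)
        exact holder
    _ ≤ D * ((∫ t : ℝ × ℝ, ‖f t‖ ^ 2) ^ ((1 : ℝ) / 2) *
          (∫ t : ℝ × ℝ, ‖g t‖ ^ 2) ^ ((1 : ℝ) / 2)) :=
        mul_le_mul_of_nonneg_right hCD hprod
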